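/- Let K be a field of characteristic 0, R = K[x_1,…,x_n], m ⊆ R a maximal ideal, I ⊆ R an ideal and d ≥ 0 an integer. Then the local dual space of I + m^{d+1} at m equals the set of operators in the local dual space of I at m whose order is at most d: D_m[I + m^{d+1}] = { c ∈ D_m[I] : c(α) = 0 whenever |α| > d }. -/

import Mathlib

set_option synthInstance.maxHeartbeats 1000000
set_option maxHeartbeats 1000000

open MvPolynomial

/-- The iterated partial derivative operator `∂^α` on `K[x_1, …, x_n]`. -/
noncomputable def pdOp {K : Type*} [CommRing K] {n : ℕ} (α : Fin n →₀ ℕ) :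
    Module.End K (MvPolynomial (Fin n) K) :=
  ((List.finRange n).map fun i =>
    ((pderiv i).toLinearMap : Module.End K (MvPolynomial (Fin n) K)) ^ (α i)).prod

/-- The action on the polynomial `f` of local differential operators at `m`
(finitely supported coefficient functions `c` with values in the residue field `R α m`):
`c ↦ Σ_α c(α) · π(∂^α f)`, as a linear map over `R ⧸ m`. -/
noncomputable def diffApply {K : Type*} [Field K] {n : ℕ}
    (m : Ideal (MvPolynomial (Fin n) K)) (f : MvPolynomial (Fin n) K) :
    ((Fin n →₀ ℕ) →₀ (MvPolynomial (Fin n) K ⧸ m)) →ₗ[MvPolynomial (Fin n) K ⧸ m]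
      (MvPolynomial (Fin n) K ⧸ m) :=
  Finsupp.linearCombination _ fun α => Ideal.Quotient.mk m (pdOp α f)

/-- The local dual space `D_m[I]` of the ideal `I` at the maximal ideal `m`:
all local differential operators at `m` annihilating every element of `I`. -/
noncomputable def dualSpace {K : Type*} [Field K] {n : ℕ}
    (I m : Ideal (MvPolynomial (Fin n) K)) :
    Submodule (MvPolynomial (Fin n) K ⧸ m) ((Fin n →₀ ℕ) →₀ (MvPolynomial (Fin n) K ⧸ m)) :=
  ⨅ f ∈ I, LinearMap.ker (diffApply m f)

/-!
Let `a = (x̄₁, …, x̄ₙ) ∈ (R/m)ⁿ` be the point cut out by `m`. Taylor's formula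
`π(∂^α f) = α! · [x^α] f(x + a)` turns an operator into a functional on the Taylor coefficients
of `f` at `a`, and the translation sends `m` into the ideal of polynomials vanishing at the
origin; so `m^(d+1)` is killed by every operator of order `≤ d`.
Conversely, `R/m` is a finite, hence separable, extension of `K`, so the minimal polynomial
`qᵢ` of `x̄ᵢ` has a simple root at `x̄ᵢ`: after translation `qᵢ(xᵢ) ∈ m` becomes `xᵢ` times a
unit, and products of these give, for each `β`, an element of `m^|β|` whose Taylor expansion is
a unit times `x^β`. Testing an operator of `D_m[m^(d+1)]` against it, for `β` of maximal degree
in its support, shows that `|β| ≤ d`.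
-/

open scoped Nat

section TaylorShift

variable {K L σ : Type*}

noncomputable def taylorShift [CommSemiring K] [CommSemiring L] [Algebra K L] (a : σ → L) :
    MvPolynomial σ K →ₐ[K] MvPolynomial σ L :=
  aeval fun i => X i + C (a i)

section CommRing

variable [CommRing K] [CommRing L] [Algebra K L] (a : σ → L)

theorem constantCoeff_taylorShift (f : MvPolynomial σ K) :
    constantCoeff (taylorShift a f) = aeval a f := by
  induction f using MvPolynomial.induction_on with
  | C r => simp [taylorShift]
  | add p q hp hq => simp only [map_add, hp, hq]
  | mul_X p i hp => simp only [map_mul, hp]; simp [taylorShift]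

theorem pderiv_taylorShift (i : σ) (f : MvPolynomial σ K) :
    pderiv i (taylorShift a f) = taylorShift a (pderiv i f) := by
  classical
  induction f using MvPolynomial.induction_on with
  | C r => simp [taylorShift]
  | add p q hp hq => simp only [map_add, hp, hq]
  | mul_X p j hp =>
    simp only [taylorShift] at hp ⊢
    simp only [map_mul, Derivation.leibniz, hp, aeval_X, map_add, pderiv_X, pderiv_C, smul_eq_mul]
    rcases eq_or_ne j i with rfl | hji <;> simp [*]

theorem taylorShift_mem_pow_idealOfVars {k : ℕ} {f : MvPolynomial σ K}
    (hf : f ∈ RingHom.ker (aeval (R := K) a) ^ k) : taylorShift a f ∈ idealOfVars σ L ^ k := by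
  have hker : (RingHom.ker (aeval (R := K) a)).map (taylorShift a) ≤ idealOfVars σ L := by
    rw [Ideal.map_le_iff_le_comap]
    intro g hg
    rw [Ideal.mem_comap, ← pow_one (idealOfVars σ L), mem_pow_idealOfVars_iff']
    intro x hx
    rw [Nat.lt_one_iff, Finsupp.degree_eq_zero_iff] at hx
    rw [hx, ← constantCoeff_eq, constantCoeff_taylorShift]
    exact hg
  have hmap := Ideal.mem_map_of_mem (taylorShift a) hf
  rw [Ideal.map_pow] at hmap
  exact Ideal.pow_right_mono hker k hmap

end CommRing

section Field

variable [Field K] [Field L] [Algebra K L] (a : σ → L)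

theorem exists_taylorShift_eq_X_mul (i : σ) (hsep : IsSeparable K (a i)) :
    ∃ Q ∈ RingHom.ker (aeval (R := K) a), ∃ u : MvPolynomial σ L,
      taylorShift a Q = X i * u ∧ constantCoeff u ≠ 0 := by
  set q := minpoly K (a i)
  set r := q.map (algebraMap K L) /ₘ (Polynomial.X - Polynomial.C (a i))
  have hfac : (Polynomial.X - Polynomial.C (a i)) * r = q.map (algebraMap K L) := by
    refine Polynomial.mul_divByMonic_eq_iff_isRoot.mpr ?_
    rw [Polynomial.IsRoot, Polynomial.eval_map, ← Polynomial.aeval_def]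
    exact minpoly.aeval K (a i)
  -- `r(a i) = q'(a i)`, which is nonzero because the root `a i` of `q` is simple
  have hr : r.eval (a i) ≠ 0 := by
    have hderiv := hsep.aeval_derivative_ne_zero (minpoly.aeval K (a i))
    rw [Polynomial.aeval_def, ← Polynomial.eval_map, ← Polynomial.derivative_map, ← hfac,
      Polynomial.derivative_mul] at hderiv
    simpa using hderiv
  refine ⟨Polynomial.aeval (X i) q, ?_, Polynomial.aeval (X i + C (a i)) r, ?_, ?_⟩
  · rw [RingHom.mem_ker, ← Polynomial.aeval_algHom_apply, aeval_X]
    exact minpoly.aeval K (a i)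
  · rw [← Polynomial.aeval_algHom_apply, taylorShift, aeval_X,
      ← Polynomial.aeval_map_algebraMap L, ← hfac, map_mul]
    simp [MvPolynomial.algebraMap_eq]
  · rw [Polynomial.aeval_def, Polynomial.hom_eval₂, constantCoeff_comp_algebraMap]
    simpa using hr

theorem exists_mem_pow_taylorShift_eq_mul_monomial (hsep : ∀ i, IsSeparable K (a i))
    (β : σ →₀ ℕ) :
    ∃ F ∈ RingHom.ker (aeval (R := K) a) ^ β.degree, ∃ u : MvPolynomial σ L,
      taylorShift a F = u * monomial β 1 ∧ constantCoeff u ≠ 0 := by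
  choose Q hQ u hu hu0 using fun i => exists_taylorShift_eq_X_mul a i (hsep i)
  refine ⟨β.prod fun i k => Q i ^ k, ?_, β.prod fun i k => u i ^ k, ?_, ?_⟩
  · rw [Finsupp.prod, Finsupp.degree_apply, ← Finset.prod_pow_eq_pow_sum]
    exact Ideal.prod_mem_prod fun i _ => Ideal.pow_mem_pow (hQ i) _
  · simp only [Finsupp.prod, map_prod, map_pow, hu, mul_pow, Finset.prod_mul_distrib,
      monomial_eq, C_1, one_mul]
    ring
  · rw [Finsupp.prod, map_prod]
    exact Finset.prod_ne_zero_iff.mpr fun i _ => by rw [map_pow]; exact pow_ne_zero _ (hu0 i)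

end Field

end TaylorShift

section PartialDerivatives

variable {K : Type*} [CommRing K] {n : ℕ}

theorem pderiv_pow_monomial (i : Fin n) (k : ℕ) (β : Fin n →₀ ℕ) (r : K) :
    ((pderiv i).toLinearMap ^ k : Module.End K (MvPolynomial (Fin n) K)) (monomial β r) =
      monomial (β - Finsupp.single i k) ((β i).descFactorial k * r) := by
  induction k with
  | zero => simp
  | succ k ih =>
    rw [pow_succ', Module.End.mul_apply, ih]
    rw [show ∀ p, (pderiv i).toLinearMap p = pderiv i p from fun _ => rfl, pderiv_monomial,
      tsub_tsub, ← Finsupp.single_add, Finsupp.tsub_apply, Finsupp.single_eq_same,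
      Nat.descFactorial_succ]
    push_cast
    ring_nf

theorem list_prod_pderiv_pow_monomial (α : Fin n →₀ ℕ) {l : List (Fin n)} (hl : l.Nodup)
    (β : Fin n →₀ ℕ) (r : K) :
    (l.map fun i => ((pderiv i).toLinearMap ^ α i : Module.End K (MvPolynomial (Fin n) K))).prod
        (monomial β r) =
      monomial (β - (l.map fun i => Finsupp.single i (α i)).sum)
        ((l.map fun i => (β i).descFactorial (α i)).prod * r) := by
  induction l with
  | nil => simp
  | cons i l ih =>
    rw [List.nodup_cons] at hl
    have hi : (l.map fun j => Finsupp.single j (α j)).sum i = 0 := by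
      rw [← Finsupp.applyAddHom_apply, map_list_sum, List.map_map]
      refine List.sum_eq_zero fun x hx => ?_
      obtain ⟨j, hj, rfl⟩ := List.mem_map.mp hx
      exact Finsupp.single_eq_of_ne (by rintro rfl; exact hl.1 hj)
    simp only [List.map_cons, List.prod_cons, List.sum_cons, Module.End.mul_apply, ih hl.2,
      pderiv_pow_monomial, Finsupp.tsub_apply, hi, tsub_zero, tsub_tsub]
    push_cast
    rw [add_comm (Finsupp.single _ _), mul_assoc]

theorem pdOp_monomial (α β : Fin n →₀ ℕ) (r : K) :
    pdOp α (monomial β r) = monomial (β - α) ((∏ i, (β i).descFactorial (α i) : ℕ) * r) := by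
  rw [pdOp, list_prod_pderiv_pow_monomial α (List.nodup_finRange n), Fin.prod_univ_def]
  congr
  rw [← Fin.sum_univ_def, Finsupp.univ_sum_single]

theorem constantCoeff_pdOp (α : Fin n →₀ ℕ) (u : MvPolynomial (Fin n) K) :
    constantCoeff (pdOp α u) = (∏ i, (α i)! : ℕ) * coeff α u := by
  induction u using MvPolynomial.induction_on' with
  | add p q hp hq => rw [map_add, map_add, hp, hq, coeff_add, mul_add]
  | monomial β r =>
    rw [pdOp_monomial, constantCoeff_monomial, coeff_monomial]
    rcases eq_or_ne β α with rfl | hne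
    · simp [Nat.descFactorial_self]
    by_cases hle : β ≤ α
    · obtain ⟨i, hi⟩ : ∃ i, β i < α i := by
        by_contra! h
        exact hne (le_antisymm hle h)
      have h0 : ∏ i, (β i).descFactorial (α i) = 0 :=
        Finset.prod_eq_zero (Finset.mem_univ i) (Nat.descFactorial_eq_zero_iff_lt.mpr hi)
      rw [h0, if_neg hne]
      simp
    · simp [tsub_eq_zero_iff_le, hle, hne]

theorem semiconj_pdOp {L : Type*} [CommRing L]
    {F : MvPolynomial (Fin n) K → MvPolynomial (Fin n) L}
    (hF : ∀ i, Function.Semiconj F (pderiv i) (pderiv i)) (α : Fin n →₀ ℕ) :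
    Function.Semiconj F (pdOp α) (pdOp α) := by
  suffices ∀ (l : List (Fin n)) u,
      F ((l.map fun i => ((pderiv i).toLinearMap ^ α i : Module.End K _)).prod u) =
        (l.map fun i => ((pderiv i).toLinearMap ^ α i : Module.End L _)).prod (F u) from this _
  intro l
  induction l with
  | nil => exact fun _ => rfl
  | cons i l ih =>
    intro u
    simp only [List.map_cons, List.prod_cons, Module.End.mul_apply, ← ih, Module.End.pow_apply]
    exact (hF i).iterate_right (α i) _

theorem aeval_pdOp {L : Type*} [CommRing L] [Algebra K L] (a : Fin n → L) (α : Fin n →₀ ℕ)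
    (f : MvPolynomial (Fin n) K) :
    aeval a (pdOp α f) = (∏ i, (α i)! : ℕ) * coeff α (taylorShift a f) := by
  rw [← constantCoeff_taylorShift,
    semiconj_pdOp (fun i f => (pderiv_taylorShift a i f).symm) α f, constantCoeff_pdOp]

end PartialDerivatives

theorem Finsupp.eq_of_le_of_degree_le {σ : Type*} {α β : σ →₀ ℕ} (hle : β ≤ α)
    (hdeg : α.degree ≤ β.degree) : α = β := by
  have hsplit : α.degree = β.degree + (α - β).degree := by
    rw [← map_add, add_tsub_cancel_of_le hle]
  have hzero : α - β = 0 := (Finsupp.degree_eq_zero_iff _).mp (by omega)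
  exact le_antisymm (tsub_eq_zero_iff_le.mp hzero) hle

section LocalDualSpace

section ResiduePoint

variable {K σ : Type*} [CommRing K] (m : Ideal (MvPolynomial σ K))

noncomputable def residuePoint : σ → MvPolynomial σ K ⧸ m :=
  fun i => Ideal.Quotient.mk m (X i)

theorem aeval_residuePoint (f : MvPolynomial σ K) :
    aeval (residuePoint m) f = Ideal.Quotient.mk m f :=
  (DFunLike.congr_fun (aeval_unique (Ideal.Quotient.mkₐ K m)) f).symm

theorem ker_aeval_residuePoint : RingHom.ker (aeval (R := K) (residuePoint m)) = m := by
  ext f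
  rw [RingHom.mem_ker, aeval_residuePoint, Ideal.Quotient.eq_zero_iff_mem]

end ResiduePoint

variable {K : Type*} [Field K] {n : ℕ}

-- Zariski's lemma
instance isIntegral_quotient_of_isMaximal (m : Ideal (MvPolynomial (Fin n) K)) [m.IsMaximal] :
    Algebra.IsIntegral K (MvPolynomial (Fin n) K ⧸ m) :=
  ⟨quotient_mk_comp_C_isIntegral_of_isJacobsonRing m⟩

variable (m : Ideal (MvPolynomial (Fin n) K))

theorem diffApply_apply (f : MvPolynomial (Fin n) K)
    (c : (Fin n →₀ ℕ) →₀ (MvPolynomial (Fin n) K ⧸ m)) :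
    diffApply m f c =
      c.sum fun α r => r * ((∏ i, (α i)! : ℕ) * coeff α (taylorShift (residuePoint m) f)) := by
  simp only [diffApply, Finsupp.linearCombination_apply, smul_eq_mul, ← aeval_residuePoint,
    aeval_pdOp]

variable {m}

theorem mem_dualSpace_iff {I : Ideal (MvPolynomial (Fin n) K)}
    {c : (Fin n →₀ ℕ) →₀ (MvPolynomial (Fin n) K ⧸ m)} :
    c ∈ dualSpace I m ↔ ∀ f ∈ I, diffApply m f c = 0 := by
  simp [dualSpace]

theorem mem_dualSpace_sup {I J : Ideal (MvPolynomial (Fin n) K)}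
    {c : (Fin n →₀ ℕ) →₀ (MvPolynomial (Fin n) K ⧸ m)} :
    c ∈ dualSpace (I ⊔ J) m ↔ c ∈ dualSpace I m ∧ c ∈ dualSpace J m := by
  simp only [mem_dualSpace_iff]
  refine ⟨fun h => ⟨fun f hf => h f (Ideal.mem_sup_left hf),
    fun f hf => h f (Ideal.mem_sup_right hf)⟩, fun ⟨hI, hJ⟩ f hf => ?_⟩
  obtain ⟨g, hg, h, hh, rfl⟩ := Submodule.mem_sup.mp hf
  have hadd : diffApply m (g + h) c = diffApply m g c + diffApply m h c := by
    simp only [diffApply_apply, map_add, coeff_add, mul_add, Finsupp.sum_add]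
  rw [hadd, hI g hg, hJ h hh, add_zero]

theorem degree_le_of_mem_dualSpace_pow [CharZero K] [m.IsMaximal] {d : ℕ}
    {c : (Fin n →₀ ℕ) →₀ (MvPolynomial (Fin n) K ⧸ m)} (hc : c ∈ dualSpace (m ^ (d + 1)) m)
    {β : Fin n →₀ ℕ} (hβ : β ∈ c.support) (hmax : ∀ α ∈ c.support, α.degree ≤ β.degree) :
    β.degree ≤ d := by
  let := Ideal.Quotient.field m
  by_contra! hd
  obtain ⟨F, hF, u, hFu, hu0⟩ := exists_mem_pow_taylorShift_eq_mul_monomial (residuePoint m)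
    (fun i => Algebra.IsSeparable.isSeparable K _) β
  rw [ker_aeval_residuePoint] at hF
  have hcF := mem_dualSpace_iff.mp hc F (Ideal.pow_le_pow_right hd hF)
  rw [diffApply_apply, Finsupp.sum, Finset.sum_eq_single β, hFu, coeff_mul_monomial',
    if_pos le_rfl, tsub_self, ← constantCoeff_eq, mul_one] at hcF
  · have := charZero_of_injective_algebraMap (algebraMap K (MvPolynomial (Fin n) K ⧸ m)).injective
    have hfact : ((∏ i, (β i)! : ℕ) : MvPolynomial (Fin n) K ⧸ m) ≠ 0 :=
      Nat.cast_ne_zero.mpr (Finset.prod_ne_zero_iff.mpr fun i _ => Nat.factorial_ne_zero _)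
    exact mul_ne_zero (Finsupp.mem_support_iff.mp hβ) (mul_ne_zero hfact hu0) hcF
  · intro α hα hne
    rw [hFu, coeff_mul_monomial', if_neg fun hle => hne
      (Finsupp.eq_of_le_of_degree_le hle (hmax α hα)), mul_zero, mul_zero]
  · exact fun h => (h hβ).elim

theorem mem_dualSpace_pow_iff [CharZero K] [m.IsMaximal] (d : ℕ)
    (c : (Fin n →₀ ℕ) →₀ (MvPolynomial (Fin n) K ⧸ m)) :
    c ∈ dualSpace (m ^ (d + 1)) m ↔ ∀ α : Fin n →₀ ℕ, d < α.degree → c α = 0 := by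
  constructor
  · intro hc α hα
    by_contra hcα
    obtain ⟨β, hβ, hmax⟩ := c.support.exists_max_image Finsupp.degree
      ⟨α, Finsupp.mem_support_iff.mpr hcα⟩
    have hαβ := hmax α (Finsupp.mem_support_iff.mpr hcα)
    have hβd := degree_le_of_mem_dualSpace_pow hc hβ hmax
    omega
  · intro hc
    refine mem_dualSpace_iff.mpr fun f hf => ?_
    rw [← ker_aeval_residuePoint m] at hf
    have hTf := (mem_pow_idealOfVars_iff' _ _).mp (taylorShift_mem_pow_idealOfVars _ hf)
    rw [diffApply_apply]
    refine Finset.sum_eq_zero fun α _ => ?_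
    by_cases hα : d < α.degree
    · simp only [hc α hα, zero_mul]
    · simp only [hTf α (by omega), mul_zero]

end LocalDualSpace

/-- The truncated local dual space `D_m[I + m^(d+1)]` consists exactly of the operators
in `D_m[I]` of order at most `d`. -/
theorem dualSpace_add_pow_eq_truncation
    {K : Type*} [Field K] [CharZero K] {n : ℕ}
    (I m : Ideal (MvPolynomial (Fin n) K)) [m.IsMaximal] (d : ℕ) :
    ∀ c : (Fin n →₀ ℕ) →₀ (MvPolynomial (Fin n) K ⧸ m),
      c ∈ dualSpace (I + m ^ (d + 1)) m ↔
        c ∈ dualSpace I m ∧ ∀ α : Fin n →₀ ℕ, d < (α.sum fun _ k => k) → c α = 0 := by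
  intro c
  rw [Submodule.add_eq_sup, mem_dualSpace_sup, mem_dualSpace_pow_iff]
  rfl
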